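/- arXiv:0902.4843 — 6 statements merged into one kernel-verified Lean document; each statement's English description precedes it below -/
import Mathlib

section
/- For the Nagumo norm, the derivative satisfies ‖f′‖_{p+1,r} ≤ e·(p+1)·‖f‖_{p,r}, with the same radius r on both sides. -/
/-!
Fix `z` in the disc, put `d = r - |z|` and let `M` bound `|f(w)| (r - |w|)^p`. On the circle of
radius `s < d` about `z` we have `r - |w| ≥ d - s`, so Cauchy's estimate gives
`|f'(z)| (d - s)^p s ≤ M`. The choice `s = d / (p + 1)` maximises `(d - s)^p s`, and then
`d^(p+1) ≤ e (p + 1) (d - s)^p s` because `(1 + 1/p)^p ≤ e`.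
-/

/-- The Nagumo norm of index `(p, r)`:
`‖f‖_{p,r} = sup_{|z|<r} |f(z)| (r - |z|)^p`, valued in `ℝ≥0∞`. -/
noncomputable def nagumoNorm (r p : ℝ) (f : ℂ → ℂ) : ENNReal :=
  ⨆ z ∈ Metric.ball (0 : ℂ) r, ENNReal.ofReal (‖f z‖ * (r - ‖z‖) ^ p)

open Metric Set

theorem Real.add_one_rpow_le_exp_mul_rpow {p : ℝ} (hp : 0 ≤ p) :
    (p + 1) ^ p ≤ Real.exp 1 * p ^ p := by
  rcases hp.eq_or_lt with rfl | hp
  · simp [Real.one_le_exp zero_le_one]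
  calc (p + 1) ^ p = p ^ p * (p⁻¹ + 1) ^ p := by
        rw [← Real.mul_rpow hp.le (by positivity), mul_add, mul_inv_cancel₀ hp.ne', mul_one,
          add_comm]
    _ ≤ p ^ p * Real.exp p⁻¹ ^ p := by gcongr; exact Real.add_one_le_exp _
    _ = Real.exp 1 * p ^ p := by rw [← Real.exp_mul, inv_mul_cancel₀ hp.ne', mul_comm]

theorem Real.add_one_mul_rpow_add_one_le {p s : ℝ} (hp : 0 ≤ p) (hs : 0 ≤ s) :
    ((p + 1) * s) ^ (p + 1) ≤ Real.exp 1 * (p + 1) * ((p * s) ^ p * s) := by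
  rw [Real.rpow_add_one' (by positivity) (by linarith), Real.mul_rpow (by linarith) hs,
    Real.mul_rpow hp hs]
  calc (p + 1) ^ p * s ^ p * ((p + 1) * s)
      ≤ Real.exp 1 * p ^ p * s ^ p * ((p + 1) * s) := by
        gcongr; exact Real.add_one_rpow_le_exp_mul_rpow hp
    _ = Real.exp 1 * (p + 1) * (p ^ p * s ^ p * s) := by ring

theorem nagumoNorm_le_ofReal {r p M : ℝ} {f : ℂ → ℂ}
    (hM : ∀ z ∈ ball (0 : ℂ) r, ‖f z‖ * (r - ‖z‖) ^ p ≤ M) :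
    nagumoNorm r p f ≤ ENNReal.ofReal M :=
  iSup₂_le fun z hz => ENNReal.ofReal_le_ofReal (hM z hz)

theorem norm_mul_rpow_le_toReal_nagumoNorm {r p : ℝ} {f : ℂ → ℂ} (hf : nagumoNorm r p f ≠ ⊤)
    {z : ℂ} (hz : z ∈ ball (0 : ℂ) r) :
    ‖f z‖ * (r - ‖z‖) ^ p ≤ (nagumoNorm r p f).toReal := by
  rw [← ENNReal.ofReal_le_iff_le_toReal hf]
  exact le_iSup₂ (f := fun z (_ : z ∈ ball (0 : ℂ) r) => ENNReal.ofReal (‖f z‖ * (r - ‖z‖) ^ p))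
    z hz

section CauchyEstimate

variable {r p M : ℝ} {f : ℂ → ℂ}

theorem norm_deriv_mul_rpow_mul_le (hp : 0 ≤ p) (hf : DifferentiableOn ℂ f (ball 0 r))
    (hM : ∀ w ∈ ball (0 : ℂ) r, ‖f w‖ * (r - ‖w‖) ^ p ≤ M) {z : ℂ} {s : ℝ} (hs : 0 < s)
    (hsz : s < r - ‖z‖) :
    ‖deriv f z‖ * ((r - ‖z‖ - s) ^ p * s) ≤ M := by
  have hsub : closedBall z s ⊆ ball 0 r :=
    closedBall_subset_ball' (by rw [dist_zero_right]; linarith)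
  have hgap : 0 < r - ‖z‖ - s := by linarith
  have hsphere : ∀ w ∈ sphere z s, ‖f w‖ ≤ M / (r - ‖z‖ - s) ^ p := by
    intro w hw
    have hws : ‖w‖ ≤ ‖z‖ + s := norm_le_of_mem_closedBall (sphere_subset_closedBall hw)
    rw [le_div_iff₀ (by positivity)]
    calc ‖f w‖ * (r - ‖z‖ - s) ^ p ≤ ‖f w‖ * (r - ‖w‖) ^ p :=
          mul_le_mul_of_nonneg_left (Real.rpow_le_rpow hgap.le (by linarith) hp) (norm_nonneg _)
      _ ≤ M := hM w (hsub (sphere_subset_closedBall hw))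
  have hcauchy := Complex.norm_deriv_le_of_forall_mem_sphere_norm_le hs
    (hf.mono (closure_ball_subset_closedBall.trans hsub)).diffContOnCl hsphere
  rwa [div_div, le_div_iff₀ (by positivity)] at hcauchy

/-- For `p = 0` the optimal radius `s = r - ‖z‖` is not allowed in `norm_deriv_mul_rpow_mul_le`,
whence the passage to the closed interval. -/
theorem norm_deriv_mul_rpow_mul_le_of_mem_Icc (hp : 0 ≤ p)
    (hf : DifferentiableOn ℂ f (ball 0 r))
    (hM : ∀ w ∈ ball (0 : ℂ) r, ‖f w‖ * (r - ‖w‖) ^ p ≤ M) {z : ℂ} (hz : ‖z‖ < r) {s : ℝ}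
    (hs : s ∈ Icc 0 (r - ‖z‖)) :
    ‖deriv f z‖ * ((r - ‖z‖ - s) ^ p * s) ≤ M := by
  have hcont : Continuous fun s : ℝ => ‖deriv f z‖ * ((r - ‖z‖ - s) ^ p * s) := by
    have : Continuous fun s : ℝ => (r - ‖z‖ - s) ^ p :=
      (continuous_const.sub continuous_id).rpow_const fun _ => Or.inr hp
    fun_prop
  rw [← closure_Ioo (sub_pos.2 hz).ne] at hs
  exact closure_minimal (fun s hs => norm_deriv_mul_rpow_mul_le hp hf hM hs.1 hs.2)
    (isClosed_le hcont continuous_const) hs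

theorem norm_deriv_mul_rpow_le (hp : 0 ≤ p) (hf : DifferentiableOn ℂ f (ball 0 r))
    (hM : ∀ w ∈ ball (0 : ℂ) r, ‖f w‖ * (r - ‖w‖) ^ p ≤ M) {z : ℂ} (hz : z ∈ ball (0 : ℂ) r) :
    ‖deriv f z‖ * (r - ‖z‖) ^ (p + 1) ≤ Real.exp 1 * (p + 1) * M := by
  rw [mem_ball_zero_iff] at hz
  set d := r - ‖z‖
  set s := d / (p + 1)
  have hd : 0 < d := sub_pos.2 hz
  have hs : s ∈ Icc 0 d := ⟨by positivity, div_le_self hd.le (by linarith)⟩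
  have hd_eq : d = (p + 1) * s := (mul_div_cancel₀ d (by positivity : p + 1 ≠ 0)).symm
  have hds : d - s = p * s := by nth_rewrite 1 [hd_eq]; ring
  have hbound := norm_deriv_mul_rpow_mul_le_of_mem_Icc hp hf hM hz hs
  rw [hds] at hbound
  calc ‖deriv f z‖ * d ^ (p + 1)
      ≤ ‖deriv f z‖ * (Real.exp 1 * (p + 1) * ((p * s) ^ p * s)) := by
        rw [hd_eq]; gcongr; exact Real.add_one_mul_rpow_add_one_le hp hs.1
    _ = Real.exp 1 * (p + 1) * (‖deriv f z‖ * ((p * s) ^ p * s)) := by ring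
    _ ≤ Real.exp 1 * (p + 1) * M := by gcongr

end CauchyEstimate

theorem nagumo_deriv_general (r p : ℝ) (hp : 0 ≤ p)
    (f : ℂ → ℂ) (hf : DifferentiableOn ℂ f (Metric.ball (0 : ℂ) r)) :
    nagumoNorm r (p + 1) (deriv f) ≤
      ENNReal.ofReal (Real.exp 1 * (p + 1)) * nagumoNorm r p f := by
  rcases eq_or_ne (nagumoNorm r p f) ⊤ with htop | htop
  · rw [htop, ENNReal.mul_top (by simp only [ne_eq, ENNReal.ofReal_eq_zero, not_le]; positivity)]
    exact le_top
  · rw [← ENNReal.ofReal_toReal htop, ← ENNReal.ofReal_mul (by positivity)]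
    exact nagumoNorm_le_ofReal fun z hz =>
      norm_deriv_mul_rpow_le hp hf (fun w hw => norm_mul_rpow_le_toReal_nagumoNorm htop hw) hz

theorem nagumo_deriv (r p : ℝ) (hr : 0 < r) (hp : 0 ≤ p)
    (f : ℂ → ℂ) (hf : DifferentiableOn ℂ f (Metric.ball (0 : ℂ) r)) :
    nagumoNorm r (p + 1) (deriv f) ≤
      ENNReal.ofReal (Real.exp 1 * (p + 1)) * nagumoNorm r p f :=
  nagumo_deriv_general r p hp f hf
end

section
/- (Main Gevrey theorem) Let a ∈ O(D_ρ) and f(t,z) = Σ_{j≥0} f_j(z) t^j/j! be a 1-Gevrey series. Then the unique formal solution u of u − a(z)∂_t^{−1}∂_z^2 u = f is also 1-Gevrey: there exist 0 < r' ≤ ρ and constants C, K > 0 such that |u_j(z)| ≤ C K^j Γ(1+2j) for all j ≥ 0 and |z| ≤ r'. -/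
/-! Nagumo's weighted norms. On a disc of radius `r` about the origin, the quantity
`‖u_j(z)‖ (r - |z|)^(2j)` is bounded by `C L^j (2j)!` with `L = K r² + 27 sup |a|`: Cauchy's
estimate on a circle of radius `(r - |z|)/(p + 2)` turns a bound `‖g(w)‖ (r - |w|)^p ≤ B` into
`‖g'(z)‖ (r - |z|)^(p+1) ≤ 3 (p + 2) B`, so the two derivatives in `u_{j+1} = f_{j+1} + a u_j''`
cost the factor `27 (2j+1)(2j+2)`, which is exactly absorbed by passing from `(2j)!` to
`(2j+2)!`. On `|z| ≤ r/2` the weight is at least `(r/2)^(2j)`, which gives the Gevrey bound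
with constant `4L/r²`. -/

/-- A formal series `Σ_j u_j(z) t^j/j!` with coefficients `u : ℕ → ℂ → ℂ` is 1-Gevrey
(uniformly near `z = 0`): there exist `0 < r ≤ ρ` and `C, K > 0` with
`|u_j(z)| ≤ C K^j (2j)!` for all `j` and `|z| ≤ r` (note `Γ(1+2j) = (2j)!`). -/
def IsGevrey1 (ρ : ℝ) (u : ℕ → ℂ → ℂ) : Prop :=
  ∃ r C K : ℝ, 0 < r ∧ r ≤ ρ ∧ 0 < C ∧ 0 < K ∧
    ∀ j : ℕ, ∀ z : ℂ, ‖z‖ ≤ r →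
      ‖u j z‖ ≤ C * K ^ j * (Nat.factorial (2 * j))

open Metric

theorem add_two_pow_le_three_mul_add_one_pow (p : ℕ) :
    ((p : ℝ) + 2) ^ p ≤ 3 * ((p : ℝ) + 1) ^ p := by
  have hp : (0 : ℝ) < p + 1 := by positivity
  have hexp : (1 + 1 / ((p : ℝ) + 1)) ^ p ≤ Real.exp 1 :=
    calc (1 + 1 / ((p : ℝ) + 1)) ^ p ≤ Real.exp (1 / ((p : ℝ) + 1)) ^ p := by
          gcongr
          linarith [Real.add_one_le_exp (1 / ((p : ℝ) + 1))]
      _ = Real.exp (p / ((p : ℝ) + 1)) := by rw [← Real.exp_nat_mul, mul_one_div]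
      _ ≤ Real.exp 1 := Real.exp_le_exp.2 ((div_le_one hp).2 (by linarith))
  calc ((p : ℝ) + 2) ^ p = (1 + 1 / ((p : ℝ) + 1)) ^ p * ((p : ℝ) + 1) ^ p := by
        rw [← mul_pow]; congr 1; field_simp; ring
    _ ≤ 3 * ((p : ℝ) + 1) ^ p := by
        gcongr
        linarith [Real.exp_one_lt_d9]

section Nagumo

variable {E : Type*} [NormedAddCommGroup E] {g : ℂ → E} {c z : ℂ} {r B : ℝ} {p : ℕ}

theorem nonneg_of_forall_norm_mul_pow_le
    (hB : ∀ w ∈ ball c r, ‖g w‖ * (r - dist w c) ^ p ≤ B) (hz : z ∈ ball c r) : 0 ≤ B := by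
  have hr := pos_of_mem_ball hz
  have hc := hB c (mem_ball_self hr)
  rw [dist_self, sub_zero] at hc
  exact le_trans (by positivity) hc

variable [NormedSpace ℂ E]

theorem norm_deriv_mul_pow_le (hg : DifferentiableOn ℂ g (ball c r))
    (hB : ∀ w ∈ ball c r, ‖g w‖ * (r - dist w c) ^ p ≤ B) (hz : z ∈ ball c r) :
    ‖deriv g z‖ * (r - dist z c) ^ (p + 1) ≤ 3 * (p + 2) * B := by
  set d := r - dist z c
  have hd : 0 < d := sub_pos.2 (mem_ball.1 hz)
  have hB0 := nonneg_of_forall_norm_mul_pow_le hB hz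
  -- On the circle of radius `s = d / (p + 2)` about `z` the weight is at least `d - s`, and
  -- `(d / (d - s)) ^ p = ((p + 2) / (p + 1)) ^ p` stays below `e`.
  set s := d / (p + 2)
  have hs : 0 < s := by positivity
  have hsd : s < d := div_lt_self hd (by linarith [(p.cast_nonneg : (0 : ℝ) ≤ p)])
  have hnear : ∀ w ∈ closedBall z s, w ∈ ball c r ∧ d - s ≤ r - dist w c := by
    intro w hw
    have := dist_triangle w z c
    have := mem_closedBall.1 hw
    exact ⟨mem_ball.2 (by linarith), by linarith⟩
  have hsphere : ∀ w ∈ sphere z s, ‖g w‖ ≤ B / (d - s) ^ p := by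
    intro w hw
    obtain ⟨hwc, hdw⟩ := hnear w (sphere_subset_closedBall hw)
    rw [le_div_iff₀ (pow_pos (sub_pos.2 hsd) p)]
    calc ‖g w‖ * (d - s) ^ p ≤ ‖g w‖ * (r - dist w c) ^ p := by gcongr
      _ ≤ B := hB w hwc
  have hcl : DiffContOnCl ℂ g (ball z s) := by
    refine DifferentiableOn.diffContOnCl ?_
    rw [closure_ball z hs.ne']
    exact hg.mono fun w hw ↦ (hnear w hw).1
  have hcauchy := Complex.norm_deriv_le_of_forall_mem_sphere_norm_le hs hcl hsphere
  rw [div_div, le_div_iff₀ (by positivity)] at hcauchy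
  have hratio : ((p : ℝ) + 2) ^ p / ((p : ℝ) + 1) ^ p ≤ 3 :=
    div_le_of_le_mul₀ (by positivity) (by norm_num) (add_two_pow_le_three_mul_add_one_pow p)
  have hsplit : d ^ (p + 1) = (d - s) ^ p * s * (((p + 2) ^ p / (p + 1) ^ p) * (p + 2)) := by
    have hds : d - s = d * (p + 1) / (p + 2) := by simp only [s]; field_simp; ring
    rw [hds, div_pow, mul_pow]; simp only [s]; field_simp; ring
  calc ‖deriv g z‖ * d ^ (p + 1)
      = ‖deriv g z‖ * ((d - s) ^ p * s) * (((p + 2) ^ p / (p + 1) ^ p) * (p + 2)) := by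
        rw [hsplit]; ring
    _ ≤ B * (3 * (p + 2)) := by gcongr
    _ = 3 * (p + 2) * B := by ring

theorem norm_deriv_deriv_mul_pow_le [CompleteSpace E] (hg : DifferentiableOn ℂ g (ball c r))
    (hB : ∀ w ∈ ball c r, ‖g w‖ * (r - dist w c) ^ p ≤ B) (hz : z ∈ ball c r) :
    ‖deriv (deriv g) z‖ * (r - dist z c) ^ (p + 2) ≤ 27 * ((p + 1) * (p + 2)) * B := by
  have h := norm_deriv_mul_pow_le (hg.deriv isOpen_ball)
    (fun w hw ↦ norm_deriv_mul_pow_le hg hB hw) hz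
  have hB0 := nonneg_of_forall_norm_mul_pow_le hB hz
  calc ‖deriv (deriv g) z‖ * (r - dist z c) ^ (p + 2)
      ≤ 3 * ((p + 1 : ℕ) + 2) * (3 * (p + 2) * B) := h
    _ ≤ 27 * ((p + 1) * (p + 2)) * B := by
      push_cast
      nlinarith [mul_nonneg (mul_nonneg p.cast_nonneg (by positivity : (0 : ℝ) ≤ p + 2)) hB0]

end Nagumo

section Recurrence

variable {a : ℂ → ℂ} {f u : ℕ → ℂ → ℂ} {c : ℂ} {r A C K : ℝ}

theorem norm_mul_pow_le_of_recurrence (hK : 0 ≤ K) (ha : ∀ w ∈ ball c r, ‖a w‖ ≤ A)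
    (hf : ∀ j, ∀ w ∈ ball c r, ‖f j w‖ ≤ C * K ^ j * (2 * j).factorial)
    (hu : ∀ j, DifferentiableOn ℂ (u j) (ball c r)) (hu₀ : ∀ w ∈ ball c r, u 0 w = f 0 w)
    (hu_succ : ∀ j, ∀ w ∈ ball c r, u (j + 1) w = f (j + 1) w + a w * deriv (deriv (u j)) w)
    (j : ℕ) {z : ℂ} (hz : z ∈ ball c r) :
    ‖u j z‖ * (r - dist z c) ^ (2 * j) ≤
      C * (K * r ^ 2 + 27 * A) ^ j * (2 * j).factorial := by
  induction j generalizing z with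
  | zero => simpa [hu₀ z hz] using hf 0 z hz
  | succ j ih =>
    rw [show 2 * (j + 1) = 2 * j + 2 by ring]
    set L := K * r ^ 2 + 27 * A
    set d := r - dist z c
    have hd : 0 ≤ d := sub_nonneg.2 (mem_ball.1 hz).le
    have hdr : d ≤ r := sub_le_self r dist_nonneg
    have hA : 0 ≤ A := (norm_nonneg _).trans (ha z hz)
    have hC : 0 ≤ C := by simpa using (norm_nonneg _).trans (hf 0 z hz)
    have hfact : ((2 * j + 2).factorial : ℝ) = (2 * j + 1) * (2 * j + 2) * (2 * j).factorial := by
      rw [Nat.factorial_succ, Nat.factorial_succ]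
      push_cast; ring
    have hf' :
        ‖f (j + 1) z‖ * d ^ (2 * j + 2) ≤ C * (K * r ^ 2) ^ (j + 1) * (2 * j + 2).factorial :=
      calc ‖f (j + 1) z‖ * d ^ (2 * j + 2)
          ≤ C * K ^ (j + 1) * (2 * j + 2).factorial * r ^ (2 * j + 2) := by
            gcongr
            exact hf (j + 1) z hz
        _ = C * (K * r ^ 2) ^ (j + 1) * (2 * j + 2).factorial := by ring
    have hu'' :
        ‖deriv (deriv (u j)) z‖ * d ^ (2 * j + 2) ≤ 27 * C * L ^ j * (2 * j + 2).factorial :=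
      (norm_deriv_deriv_mul_pow_le (hu j) (fun w hw ↦ ih hw) hz).trans_eq
        (by rw [hfact]; push_cast; ring)
    calc ‖u (j + 1) z‖ * d ^ (2 * j + 2)
        ≤ ‖f (j + 1) z‖ * d ^ (2 * j + 2)
            + A * (‖deriv (deriv (u j)) z‖ * d ^ (2 * j + 2)) := by
          rw [hu_succ j z hz, ← mul_assoc, ← add_mul]
          gcongr
          refine (norm_add_le _ _).trans ?_
          rw [norm_mul]
          gcongr
          exact ha z hz
      _ ≤ C * (K * r ^ 2) ^ (j + 1) * (2 * j + 2).factorial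
            + A * (27 * C * L ^ j * (2 * j + 2).factorial) :=
          add_le_add hf' (mul_le_mul_of_nonneg_left hu'' hA)
      _ = C * (2 * j + 2).factorial * ((K * r ^ 2) ^ j * (K * r ^ 2) + L ^ j * (27 * A)) := by
          ring
      _ ≤ C * (2 * j + 2).factorial * (L ^ j * (K * r ^ 2) + L ^ j * (27 * A)) := by
          gcongr
          simp only [L]
          linarith
      _ = C * L ^ (j + 1) * (2 * j + 2).factorial := by ring

end Recurrence

theorem IsGevrey1.of_norm_mul_pow_le {ρ r C L : ℝ} {u : ℕ → ℂ → ℂ} (hr : 0 < r)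
    (hrρ : r ≤ ρ) (hC : 0 < C) (hL : 0 < L)
    (hu : ∀ j, ∀ z ∈ ball (0 : ℂ) r,
      ‖u j z‖ * (r - ‖z‖) ^ (2 * j) ≤ C * L ^ j * (2 * j).factorial) :
    IsGevrey1 ρ u := by
  refine ⟨r / 2, C, 4 * L / r ^ 2, by positivity, by linarith, hC, by positivity,
    fun j z hz ↦ ?_⟩
  have hzr : z ∈ ball (0 : ℂ) r := mem_ball_zero_iff.2 (by linarith)
  have hweight : (r / 2) ^ (2 * j) ≤ (r - ‖z‖) ^ (2 * j) := by gcongr; linarith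
  have hscale : (4 * L / r ^ 2) ^ j * (r / 2) ^ (2 * j) = L ^ j := by
    rw [pow_mul, ← mul_pow]; congr 1; field_simp; ring
  refine le_of_mul_le_mul_right ?_ (by positivity : 0 < (r / 2) ^ (2 * j))
  calc ‖u j z‖ * (r / 2) ^ (2 * j) ≤ ‖u j z‖ * (r - ‖z‖) ^ (2 * j) := by gcongr
    _ ≤ C * L ^ j * (2 * j).factorial := hu j z hzr
    _ = C * (4 * L / r ^ 2) ^ j * (2 * j).factorial * (r / 2) ^ (2 * j) := by
        rw [← hscale]; ring

theorem heat_solution_isGevrey1_general (ρ : ℝ) (a : ℂ → ℂ)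
    (ha : DifferentiableOn ℂ a (Metric.ball (0 : ℂ) ρ))
    (f u : ℕ → ℂ → ℂ) (hf : IsGevrey1 ρ f)
    (hu_hol : ∀ j, DifferentiableOn ℂ (u j) (Metric.ball (0 : ℂ) ρ))
    (hrec : ∀ j, ∀ z ∈ Metric.ball (0 : ℂ) ρ,
      u j z = f j z + (if j = 0 then 0 else a z * deriv (deriv (u (j - 1))) z)) :
    IsGevrey1 ρ u := by
  obtain ⟨r₀, C, K, hr₀, hr₀ρ, hC, hK, hfK⟩ := hf
  -- shrink the disc so that `a` is bounded on its closure
  obtain ⟨r, hr, hrr₀⟩ : ∃ r, 0 < r ∧ r < r₀ := ⟨r₀ / 2, by positivity, by linarith⟩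
  have hrρ : r < ρ := hrr₀.trans_le hr₀ρ
  have hball : ball (0 : ℂ) r ⊆ ball 0 ρ := ball_subset_ball hrρ.le
  obtain ⟨A, hA⟩ : ∃ A, ∀ w ∈ closedBall (0 : ℂ) r, ‖a w‖ ≤ A :=
    (isCompact_closedBall 0 r).exists_bound_of_continuousOn
      (ha.continuousOn.mono (closedBall_subset_ball hrρ))
  have hA₀ : 0 ≤ A := (norm_nonneg _).trans (hA 0 (mem_closedBall_self hr.le))
  refine IsGevrey1.of_norm_mul_pow_le hr hrρ.le hC (L := K * r ^ 2 + 27 * A) (by positivity)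
    fun j z hz ↦ ?_
  simpa using norm_mul_pow_le_of_recurrence hK.le (fun w hw ↦ hA w (ball_subset_closedBall hw))
    (fun j w hw ↦ hfK j w (by linarith [mem_ball_zero_iff.1 hw]))
    (fun j ↦ (hu_hol j).mono hball) (fun w hw ↦ by simpa using hrec 0 w (hball hw))
    (fun j w hw ↦ by simpa using hrec (j + 1) w (hball hw)) j hz

/-- Main Gevrey theorem: if `f` is 1-Gevrey and `u` is the (unique) formal solution of
`u - a(z) ∂_t^{-1} ∂_z² u = f`, i.e. its coefficients satisfy the recurrence
`u_j = f_j + a · u_{j-1}''` (with `u_{-1} = 0`) on `D_ρ`, then `u` is also 1-Gevrey. -/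
theorem heat_solution_isGevrey1 (ρ : ℝ) (hρ : 0 < ρ) (a : ℂ → ℂ)
    (ha : DifferentiableOn ℂ a (Metric.ball (0 : ℂ) ρ))
    (f u : ℕ → ℂ → ℂ) (hf : IsGevrey1 ρ f)
    (hu_hol : ∀ j, DifferentiableOn ℂ (u j) (Metric.ball (0 : ℂ) ρ))
    (hrec : ∀ j, ∀ z ∈ Metric.ball (0 : ℂ) ρ,
      u j z = f j z + (if j = 0 then 0 else a z * deriv (deriv (u (j - 1))) z)) :
    IsGevrey1 ρ u :=
  heat_solution_isGevrey1_general ρ a ha f u hf hu_hol hrec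
end

section
/- For all nonnegative integers ℓ with 0 ≤ p ≤ ℓ: Σ_{p=0}^{ℓ} [Γ(1+ℓ)/Γ(1+2ℓ)] · [Γ(1+2p)/Γ(1+p)] · [Γ(1+2(ℓ−p))/Γ(1+(ℓ−p))] ≤ ℓ + 1; equivalently, Σ_{p=0}^ℓ binom(ℓ,p) (2p)! (2ℓ−2p)! ≤ (ℓ+1) (2ℓ)!. -/
/-
Each summand is at most `(2ℓ)!`: writing `(2ℓ)! = C(2ℓ, 2p) (2p)! (2ℓ - 2p)!`, it suffices that
`C(ℓ, p) ≤ C(ℓ, p)² ≤ C(2ℓ, 2p)`, and the last inequality keeps one term of Vandermonde's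
identity for `C(ℓ + ℓ, p + p)`.
-/

namespace Nat

theorem choose_mul_choose_le_add_choose (m n i j : ℕ) :
    m.choose i * n.choose j ≤ (m + n).choose (i + j) := by
  rw [add_choose_eq]
  have hij : (i, j) ∈ Finset.HasAntidiagonal.antidiagonal (i + j) := by simp
  exact Finset.single_le_sum (f := fun ij : ℕ × ℕ => m.choose ij.1 * n.choose ij.2)
    (fun _ _ => zero_le _) hij

theorem choose_le_choose_two_mul {n k : ℕ} (hk : k ≤ n) :
    n.choose k ≤ (2 * n).choose (2 * k) :=
  calc n.choose k ≤ n.choose k * n.choose k := Nat.le_mul_of_pos_right _ (choose_pos hk)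
    _ ≤ (2 * n).choose (2 * k) := by
      simpa only [two_mul] using choose_mul_choose_le_add_choose n n k k

theorem choose_mul_factorial_two_mul_mul_factorial_two_mul_sub_le {n k : ℕ} (hk : k ≤ n) :
    n.choose k * (2 * k)! * (2 * (n - k))! ≤ (2 * n)! := by
  rw [mul_tsub, ← choose_mul_factorial_mul_factorial (by omega : 2 * k ≤ 2 * n)]
  gcongr
  exact choose_le_choose_two_mul hk

end Nat

/-- Combinatorial inequality: `Σ_{p=0}^ℓ C(ℓ,p) (2p)! (2(ℓ-p))! ≤ (ℓ+1) (2ℓ)!`,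
equivalently `Σ_p [Γ(1+ℓ)Γ(1+2p)Γ(1+2(ℓ-p))] / [Γ(1+2ℓ)Γ(1+p)Γ(1+(ℓ-p))] ≤ ℓ+1`. -/
theorem sum_choose_factorial_le (ℓ : ℕ) :
    ∑ p ∈ Finset.range (ℓ + 1),
        Nat.choose ℓ p * Nat.factorial (2 * p) * Nat.factorial (2 * (ℓ - p)) ≤
      (ℓ + 1) * Nat.factorial (2 * ℓ) := by
  simpa using Finset.sum_le_card_nsmul _ _ _ fun p hp =>
    Nat.choose_mul_factorial_two_mul_mul_factorial_two_mul_sub_le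
      (Nat.lt_succ_iff.mp (Finset.mem_range.mp hp))
end

section
/- In the fixed-point scheme w_0 = g, w_p = (1/a(z)) ∂_t ∂_z^{−2} w_{p−1} with a(0) ≠ 0, if |∂_t^ℓ w_0(t,z)| ≤ C′ (K′)^ℓ Γ(1+2ℓ) on Σ × D_r and B = max_{|z|≤r} |1/a(z)|, then for all p ≥ 0: |∂_t^ℓ w_p(t,z)| ≤ C′ (K′)^{ℓ+p} Γ(1+2(ℓ+p)) (B|z|²)^p/(2p)!. -/
/-- The double antiderivative in `z` vanishing to order 2 at `z = 0`:
`∂_z^{-2} h (z) = ∫_0^z (z-ζ) h(ζ) dζ = z² ∫_0^1 (1-s) h(sz) ds`. -/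
noncomputable def antideriv2 (h : ℂ → ℂ) (z : ℂ) : ℂ :=
  z ^ 2 * ∫ s in (0:ℝ)..1, (1 - (s : ℂ)) * h ((s : ℂ) * z)

/-! Write the bound as `‖∂_t^ℓ w_p(t,z)‖ ≤ |z|^{2p} M_p(ℓ)`. Since `t`-derivatives of functions
holomorphic in `t` are again holomorphic and the bounds are uniform, `∂_t^ℓ` commutes with the
integral defining `∂_z^{-2}`, so one step of the scheme trades one extra `t`-derivative
(`ℓ ↦ ℓ + 1`) for the factor `B |z|² ∫_0^1 (1-s) s^{2p} ds = B |z|² / ((2p+1)(2p+2))`, which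
turns `(2p)!` into `(2p+2)!`. -/

open Set Filter MeasureTheory intervalIntegral
open scoped Interval

lemma norm_ofReal_mul_le {s : ℝ} (hs : s ∈ Icc (0 : ℝ) 1) (z : ℂ) : ‖(s : ℂ) * z‖ ≤ ‖z‖ := by
  rw [norm_mul, Complex.norm_of_nonneg hs.1]
  exact mul_le_of_le_one_left (norm_nonneg z) hs.2

lemma norm_one_sub_ofReal {s : ℝ} (hs : s ≤ 1) : ‖1 - (s : ℂ)‖ = 1 - s := by
  rw [← Complex.ofReal_one, ← Complex.ofReal_sub, Complex.norm_of_nonneg (sub_nonneg.2 hs)]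

lemma integral_one_sub_mul_pow (n : ℕ) :
    ∫ s in (0 : ℝ)..1, (1 - s) * s ^ n = 1 / ((n + 1) * (n + 2)) := by
  have hsplit : (fun s : ℝ => (1 - s) * s ^ n) = fun s => s ^ n - s ^ (n + 1) := by
    funext s; ring
  rw [hsplit, integral_sub (intervalIntegrable_pow _) (intervalIntegrable_pow _),
    integral_pow, integral_pow]
  field_simp
  push_cast
  ring

theorem norm_antideriv2_le {h : ℂ → ℂ} {z : ℂ} {n : ℕ} {D : ℝ}
    (hh : ∀ s ∈ Icc (0 : ℝ) 1, ‖h (s * z)‖ ≤ s ^ n * D) :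
    ‖antideriv2 h z‖ ≤ ‖z‖ ^ 2 * (D / ((n + 1) * (n + 2))) := by
  have hint : ‖∫ s in (0 : ℝ)..1, (1 - (s : ℂ)) * h (s * z)‖ ≤
      ∫ s in (0 : ℝ)..1, (1 - s) * s ^ n * D := by
    refine norm_integral_le_of_norm_le zero_le_one (ae_of_all _ fun s hs => ?_)
      (Continuous.intervalIntegrable (by fun_prop) 0 1)
    rw [norm_mul, norm_one_sub_ofReal hs.2, mul_assoc]
    exact mul_le_mul_of_nonneg_left (hh s (Ioc_subset_Icc_self hs)) (sub_nonneg.2 hs.2)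
  rw [intervalIntegral.integral_mul_const, integral_one_sub_mul_pow, one_div_mul_eq_div] at hint
  rw [antideriv2, norm_mul, norm_pow]
  gcongr

section ParametricIntegral

variable {E : Type*} [NormedAddCommGroup E] [NormedSpace ℂ E]
  {S : Set ℂ} {a b : ℝ}

theorem DifferentiableOn.iteratedDeriv_of_isOpen [CompleteSpace E] {f : ℂ → E}
    (hf : DifferentiableOn ℂ f S) (hS : IsOpen S) (m : ℕ) :
    DifferentiableOn ℂ (iteratedDeriv m f) S := by
  rw [iteratedDeriv_eq_iterate]
  exact ((hf.analyticOnNhd hS).iterated_deriv m).differentiableOn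

theorem hasDerivAt_intervalIntegral_of_differentiableOn (hS : IsOpen S) (hab : a ≤ b)
    {G : ℝ → ℂ → E} (hG : ∀ s ∈ Icc a b, DifferentiableOn ℂ (G s) S)
    (hG_cont : ∀ t ∈ S, ContinuousOn (fun s => G s t) (Icc a b))
    (hG'_cont : ∀ t ∈ S, ContinuousOn (fun s => deriv (G s) t) (Icc a b))
    {M : ℝ} (hG'_le : ∀ t ∈ S, ∀ s ∈ Icc a b, ‖deriv (G s) t‖ ≤ M) {t : ℂ} (ht : t ∈ S) :
    HasDerivAt (fun t => ∫ s in a..b, G s t) (∫ s in a..b, deriv (G s) t) t := by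
  have hIoc : Ι a b ⊆ Icc a b := by
    rw [uIoc_of_le hab]
    exact Ioc_subset_Icc_self
  have hmeas {f : ℝ → E} (hf : ContinuousOn f (Icc a b)) :
      AEStronglyMeasurable f (volume.restrict (Ι a b)) :=
    (hf.mono hIoc).aestronglyMeasurable measurableSet_uIoc
  refine (hasDerivAt_integral_of_dominated_loc_of_deriv_le (F := fun t s => G s t)
    (F' := fun t s => deriv (G s) t) (bound := fun _ => M) (hS.mem_nhds ht) ?_
    ((hG_cont t ht).intervalIntegrable_of_Icc hab) (hmeas (hG'_cont t ht)) ?_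
    intervalIntegrable_const ?_).2
  · filter_upwards [hS.mem_nhds ht] with y hy using hmeas (hG_cont y hy)
  · exact ae_of_all _ fun s hs y hy => hG'_le y hy s (hIoc hs)
  · exact ae_of_all _ fun s hs y hy =>
      ((hG s (hIoc hs)).differentiableAt (hS.mem_nhds hy)).hasDerivAt

theorem iteratedDeriv_intervalIntegral [CompleteSpace E] (hS : IsOpen S) (hab : a ≤ b)
    {F : ℝ → ℂ → E} (hF : ∀ s ∈ Icc a b, DifferentiableOn ℂ (F s) S)
    (hF_cont : ∀ m, ∀ t ∈ S, ContinuousOn (fun s => iteratedDeriv m (F s) t) (Icc a b))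
    (hF_bdd : ∀ m, ∃ M, ∀ t ∈ S, ∀ s ∈ Icc a b, ‖iteratedDeriv m (F s) t‖ ≤ M) (ℓ : ℕ) :
    EqOn (iteratedDeriv ℓ fun t => ∫ s in a..b, F s t)
      (fun t => ∫ s in a..b, iteratedDeriv ℓ (F s) t) S := by
  induction ℓ with
  | zero => intro t _; simp
  | succ ℓ ih =>
    intro t ht
    obtain ⟨M, hM⟩ := hF_bdd (ℓ + 1)
    simp only [iteratedDeriv_succ] at hM ⊢
    rw [(eventuallyEq_of_mem (hS.mem_nhds ht) ih).deriv_eq]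
    exact (hasDerivAt_intervalIntegral_of_differentiableOn hS hab
      (fun s hs => (hF s hs).iteratedDeriv_of_isOpen hS ℓ) (hF_cont ℓ)
      (by simpa only [iteratedDeriv_succ] using hF_cont (ℓ + 1)) hM ht).deriv

end ParametricIntegral

theorem iteratedDeriv_antideriv2 {S : Set ℂ} (hS : IsOpen S) {r : ℝ} {u : ℂ → ℂ → ℂ}
    (hu : ∀ ζ : ℂ, ‖ζ‖ ≤ r → DifferentiableOn ℂ (fun t => u t ζ) S)
    (hu_cont : ∀ m : ℕ, ∀ t ∈ S,
      ContinuousOn (fun ζ => iteratedDeriv m (fun s => u s ζ) t) (Metric.closedBall 0 r))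
    (hu_bdd : ∀ m : ℕ, ∃ M, ∀ t ∈ S, ∀ ζ : ℂ, ‖ζ‖ ≤ r →
      ‖iteratedDeriv m (fun s => u s ζ) t‖ ≤ M)
    (ℓ : ℕ) {t : ℂ} (ht : t ∈ S) {z : ℂ} (hz : ‖z‖ ≤ r) :
    iteratedDeriv ℓ (fun t => antideriv2 (u t) z) t =
      antideriv2 (fun ζ => iteratedDeriv ℓ (fun s => u s ζ) t) z := by
  have hsz {s : ℝ} (hs : s ∈ Icc (0 : ℝ) 1) : ‖(s : ℂ) * z‖ ≤ r :=
    (norm_ofReal_mul_le hs z).trans hz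
  have hweight (m : ℕ) (s : ℝ) (t : ℂ) :
      iteratedDeriv m (fun t => (1 - (s : ℂ)) * u t (s * z)) t =
        (1 - (s : ℂ)) * iteratedDeriv m (fun t => u t (s * z)) t :=
    iteratedDeriv_const_mul_field _ _
  simp only [antideriv2, iteratedDeriv_const_mul_field]
  congr 1
  refine iteratedDeriv_intervalIntegral hS zero_le_one
    (fun s hs => (hu _ (hsz hs)).const_mul _) (fun m t ht => ?_) (fun m => ?_) ℓ ht |>.trans ?_
  · simp only [hweight]
    refine (continuousOn_const.sub Complex.continuous_ofReal.continuousOn).mul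
      ((hu_cont m t ht).comp (by fun_prop) fun s hs => ?_)
    simpa using hsz hs
  · obtain ⟨M, hM⟩ := hu_bdd m
    refine ⟨M, fun t ht s hs => ?_⟩
    rw [hweight, norm_mul, norm_one_sub_ofReal hs.2]
    exact (mul_le_of_le_one_left (norm_nonneg _) (by linarith [hs.1])).trans
      (hM t ht _ (hsz hs))
  · simp only [hweight]

theorem norm_iteratedDeriv_inv_mul_antideriv2_le {S : Set ℂ} (hS : IsOpen S) {r B : ℝ}
    {a : ℂ → ℂ} (haB : ∀ z : ℂ, ‖z‖ ≤ r → ‖(a z)⁻¹‖ ≤ B) {u v : ℂ → ℂ → ℂ}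
    (hu : ∀ ζ : ℂ, ‖ζ‖ ≤ r → DifferentiableOn ℂ (fun t => u t ζ) S)
    (hu_cont : ∀ m : ℕ, ∀ t ∈ S,
      ContinuousOn (fun ζ => iteratedDeriv m (fun s => u s ζ) t) (Metric.closedBall 0 r))
    {n : ℕ} {M : ℕ → ℝ} (hu_le : ∀ m : ℕ, ∀ t ∈ S, ∀ ζ : ℂ, ‖ζ‖ ≤ r →
      ‖iteratedDeriv m (fun s => u s ζ) t‖ ≤ ‖ζ‖ ^ n * M m)
    (hv : ∀ t ∈ S, ∀ z : ℂ, ‖z‖ ≤ r →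
      v t z = (a z)⁻¹ * antideriv2 (fun ζ => deriv (fun s => u s ζ) t) z)
    (ℓ : ℕ) {t : ℂ} (ht : t ∈ S) {z : ℂ} (hz : ‖z‖ ≤ r) :
    ‖iteratedDeriv ℓ (fun s => v s z) t‖ ≤
      B * M (ℓ + 1) * ‖z‖ ^ (n + 2) / ((n + 1) * (n + 2)) := by
  have hv_eq : iteratedDeriv ℓ (fun s => v s z) t =
      (a z)⁻¹ * antideriv2 (fun ζ => iteratedDeriv (ℓ + 1) (fun s => u s ζ) t) z := by
    have hv_on : EqOn (fun s => v s z)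
        (fun s => (a z)⁻¹ * antideriv2 (fun ζ => deriv (fun s => u s ζ) s) z) S :=
      fun s hs => hv s hs z hz
    rw [hv_on.iteratedDeriv_of_isOpen hS ℓ ht, iteratedDeriv_const_mul_field,
      iteratedDeriv_antideriv2 (u := fun t ζ => deriv (fun s => u s ζ) t) hS _ _ _ ℓ ht hz]
    · simp only [iteratedDeriv_succ']
    · intro ζ hζ
      simpa only [iteratedDeriv_one] using (hu ζ hζ).iteratedDeriv_of_isOpen hS 1
    · simpa only [← iteratedDeriv_succ'] using fun m => hu_cont (m + 1)
    · refine fun m => ⟨r ^ n * |M (m + 1)|, fun t ht ζ hζ => ?_⟩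
      rw [← iteratedDeriv_succ']
      calc _ ≤ ‖ζ‖ ^ n * M (m + 1) := hu_le (m + 1) t ht ζ hζ
        _ ≤ ‖ζ‖ ^ n * |M (m + 1)| := by gcongr; exact le_abs_self _
        _ ≤ r ^ n * |M (m + 1)| := by gcongr
  have hD : ∀ s ∈ Icc (0 : ℝ) 1, ‖iteratedDeriv (ℓ + 1) (fun t' => u t' (s * z)) t‖ ≤
      s ^ n * (‖z‖ ^ n * M (ℓ + 1)) := by
    intro s hs
    have := hu_le (ℓ + 1) t ht _ ((norm_ofReal_mul_le hs z).trans hz)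
    rwa [norm_mul, Complex.norm_of_nonneg hs.1, mul_pow, mul_assoc] at this
  calc ‖iteratedDeriv ℓ (fun s => v s z) t‖
      ≤ B * (‖z‖ ^ 2 * (‖z‖ ^ n * M (ℓ + 1) / ((n + 1) * (n + 2)))) := by
        rw [hv_eq, norm_mul]
        exact mul_le_mul (haB z hz) (norm_antideriv2_le hD) (norm_nonneg _)
          ((norm_nonneg _).trans (haB z hz))
    _ = B * M (ℓ + 1) * ‖z‖ ^ (n + 2) / ((n + 1) * (n + 2)) := by ring

theorem fixed_point_iterates_bound_general (S : Set ℂ) (hS : IsOpen S) (r B C' K' : ℝ)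
    (a : ℂ → ℂ)
    (haB : ∀ z : ℂ, ‖z‖ ≤ r → ‖(a z)⁻¹‖ ≤ B)
    (w : ℕ → ℂ → ℂ → ℂ)
    (hw_hol : ∀ p : ℕ, ∀ z : ℂ, ‖z‖ ≤ r →
      DifferentiableOn ℂ (fun t => w p t z) S)
    (hw_cont : ∀ p ℓ : ℕ, ∀ t ∈ S,
      ContinuousOn (fun z => iteratedDeriv ℓ (fun s => w p s z) t)
        (Metric.closedBall (0 : ℂ) r))
    (hrec : ∀ p : ℕ, ∀ t ∈ S, ∀ z : ℂ, ‖z‖ ≤ r →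
      w (p + 1) t z = (a z)⁻¹ * antideriv2 (fun ζ => deriv (fun s => w p s ζ) t) z)
    (h0 : ∀ ℓ : ℕ, ∀ t ∈ S, ∀ z : ℂ, ‖z‖ ≤ r →
      ‖iteratedDeriv ℓ (fun s => w 0 s z) t‖ ≤
        C' * K' ^ ℓ * (Nat.factorial (2 * ℓ))) :
    ∀ p ℓ : ℕ, ∀ t ∈ S, ∀ z : ℂ, ‖z‖ ≤ r →
      ‖iteratedDeriv ℓ (fun s => w p s z) t‖ ≤
        C' * K' ^ (ℓ + p) * (Nat.factorial (2 * (ℓ + p))) *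
          (B * ‖z‖ ^ 2) ^ p / (Nat.factorial (2 * p)) := by
  have hbound (p : ℕ) : ∀ ℓ : ℕ, ∀ t ∈ S, ∀ z : ℂ, ‖z‖ ≤ r →
      ‖iteratedDeriv ℓ (fun s => w p s z) t‖ ≤ ‖z‖ ^ (2 * p) *
        (C' * K' ^ (ℓ + p) * (Nat.factorial (2 * (ℓ + p))) * B ^ p /
          (Nat.factorial (2 * p))) := by
    induction p with
    | zero => simpa using h0
    | succ p ih =>
      intro ℓ t ht z hz
      refine (norm_iteratedDeriv_inv_mul_antideriv2_le hS haB (hw_hol p) (hw_cont p) ih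
        (hrec p) ℓ ht hz).trans_eq ?_
      rw [show ℓ + 1 + p = ℓ + (p + 1) by ring, show 2 * (p + 1) = 2 * p + 1 + 1 by ring,
        Nat.factorial_succ, Nat.factorial_succ]
      push_cast
      field_simp
      ring
  intro p ℓ t ht z hz
  refine (hbound p ℓ t ht z hz).trans_eq ?_
  ring

/-- Estimates for the fixed-point scheme `w_0 = g`, `w_{p+1} = (1/a) ∂_t ∂_z^{-2} w_p`
with `a(0) ≠ 0`: if `|∂_t^ℓ w_0| ≤ C' (K')^ℓ (2ℓ)!` on `S × D_r` and `|1/a| ≤ B` on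
`|z| ≤ r`, then `|∂_t^ℓ w_p(t,z)| ≤ C' (K')^{ℓ+p} (2(ℓ+p))! (B|z|²)^p/(2p)!`. -/
theorem fixed_point_iterates_bound (S : Set ℂ) (hS : IsOpen S) (r B C' K' : ℝ)
    (hr : 0 < r) (hB : 0 < B) (hC' : 0 < C') (hK' : 0 < K')
    (a : ℂ → ℂ) (ha : ∀ z : ℂ, ‖z‖ ≤ r → a z ≠ 0)
    (haB : ∀ z : ℂ, ‖z‖ ≤ r → ‖(a z)⁻¹‖ ≤ B)
    (w : ℕ → ℂ → ℂ → ℂ)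
    (hw_hol : ∀ p : ℕ, ∀ z : ℂ, ‖z‖ ≤ r →
      DifferentiableOn ℂ (fun t => w p t z) S)
    (hw_cont : ∀ p ℓ : ℕ, ∀ t ∈ S,
      ContinuousOn (fun z => iteratedDeriv ℓ (fun s => w p s z) t)
        (Metric.closedBall (0 : ℂ) r))
    (hrec : ∀ p : ℕ, ∀ t ∈ S, ∀ z : ℂ, ‖z‖ ≤ r →
      w (p + 1) t z = (a z)⁻¹ * antideriv2 (fun ζ => deriv (fun s => w p s ζ) t) z)
    (h0 : ∀ ℓ : ℕ, ∀ t ∈ S, ∀ z : ℂ, ‖z‖ ≤ r →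
      ‖iteratedDeriv ℓ (fun s => w 0 s z) t‖ ≤
        C' * K' ^ ℓ * (Nat.factorial (2 * ℓ))) :
    ∀ p ℓ : ℕ, ∀ t ∈ S, ∀ z : ℂ, ‖z‖ ≤ r →
      ‖iteratedDeriv ℓ (fun s => w p s z) t‖ ≤
        C' * K' ^ (ℓ + p) * (Nat.factorial (2 * (ℓ + p))) *
          (B * ‖z‖ ^ 2) ^ p / (Nat.factorial (2 * p)) :=
  fixed_point_iterates_bound_general S hS r B C' K' a haB w hw_hol hw_cont hrec h0
end

section
/- There is no holomorphic function u(t,z), defined for t in an open sector of opening greater than π (in any direction θ) and |z| < r, bounded there, whose n-th z-Taylor coefficients at z = 0 are e^{n(n−1)t} for all n ≥ 2. Equivalently: if |u(t,z)| ≤ C on Σ × D_r and ∂_z^n u(t,0)/n! = e^{n(n−1)t}, then Cauchy estimates give |e^{n(n−1)t}| ≤ C/R^n for all R < r, which fails since e^{n(n−1)t} is unbounded on any sector of opening > π for n ≥ 2. -/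
/-!
At a point `t` of the sector with `Re t > 0`, Cauchy's estimate on a circle of radius
`R < r` gives `‖e^{n(n-1)t}‖ Rⁿ ≤ C` for all `n ≥ 2`; but
`‖e^{n(n-1)t}‖ Rⁿ = e^{n((n-1) Re t + log R)} → ∞`. Such points exist because an arc of
directions of opening `> π` always contains a direction of positive cosine.
-/

/-- The open sector of directions `φ` with `|φ - θ| < α` (bisected by `θ`,
opening `2α`), issuing from `0`. -/
def Sector (θ α : ℝ) : Set ℂ :=
  {t : ℂ | ∃ s φ : ℝ, 0 < s ∧ |φ - θ| < α ∧ t = s * Complex.exp (φ * Complex.I)}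

open Real Metric Filter

/-- The witness is `θ - ψ + κ ψ`, where `ψ ∈ (-π, π]` represents `θ` modulo `2π`: it lies
`(1 - κ)|ψ| < α` from `θ` and, modulo `2π`, `κ |ψ| < π / 2` from `0`. -/
theorem Real.exists_abs_sub_lt_cos_pos (θ : ℝ) {α : ℝ} (hα : π / 2 < α) :
    ∃ φ : ℝ, |φ - θ| < α ∧ 0 < cos φ := by
  set ψ := (θ : Angle).toReal
  set m := min α π
  set κ := (3 * π / 2 - m) / (2 * π)
  have hψ : |ψ| ≤ π := Angle.abs_toReal_le_pi _
  have hm : π / 2 < m := lt_min hα (by linarith [pi_pos])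
  have hmα : m ≤ α := min_le_left _ _
  have hmπ : m ≤ π := min_le_right _ _
  have hκ : 0 < κ := div_pos (by linarith) (by positivity)
  have hκπ : κ * π = (3 * π / 2 - m) / 2 := by simp only [κ]; field_simp
  refine ⟨θ - ψ + κ * ψ, ?_, ?_⟩
  · calc |θ - ψ + κ * ψ - θ| = (1 - κ) * |ψ| := by
          rw [show θ - ψ + κ * ψ - θ = -((1 - κ) * ψ) by ring, abs_neg, abs_mul,
            abs_of_pos (by nlinarith [pi_pos])]
      _ ≤ (1 - κ) * π := by gcongr; nlinarith [pi_pos]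
      _ < α := by linarith
  · have hcoe : ((θ - ψ + κ * ψ : ℝ) : Angle) = (κ * ψ : ℝ) := by
      rw [Angle.coe_add, Angle.coe_sub, Angle.coe_toReal, sub_self, zero_add]
    have hsmall : |κ * ψ| < π / 2 := by
      rw [abs_mul, abs_of_pos hκ]
      nlinarith
    rw [← Angle.cos_coe, hcoe, Angle.cos_coe]
    exact cos_pos_of_mem_Ioo (abs_lt.mp hsmall)

theorem exists_mem_sector_norm_eq_re_pos (θ : ℝ) {α s : ℝ} (hα : π / 2 < α) (hs : 0 < s) :
    ∃ t ∈ Sector θ α, ‖t‖ = s ∧ 0 < t.re := by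
  obtain ⟨φ, hφ, hcos⟩ := Real.exists_abs_sub_lt_cos_pos θ hα
  refine ⟨s * Complex.exp (φ * Complex.I), ⟨s, φ, hs, hφ, rfl⟩, ?_, ?_⟩
  · rw [norm_mul, Complex.norm_exp_ofReal_mul_I, Complex.norm_real, Real.norm_of_nonneg hs.le,
      mul_one]
  · rw [Complex.re_ofReal_mul, Complex.exp_ofReal_mul_I_re]
    positivity

theorem tendsto_norm_exp_mul_mul_pow_atTop {t : ℂ} (ht : 0 < t.re) {R : ℝ} (hR : 0 < R) :
    Tendsto (fun n : ℕ => ‖Complex.exp (n * (n - 1) * t)‖ * R ^ n) atTop atTop := by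
  have hexp : ∀ n : ℕ, ‖Complex.exp (n * (n - 1) * t)‖ * R ^ n
      = Real.exp (n * ((n - 1) * t.re + Real.log R)) := fun n => by
    have hre : ((n : ℂ) * (n - 1) * t).re = n * (n - 1) * t.re := by simp
    rw [Complex.norm_exp, hre, ← Real.rpow_natCast, Real.rpow_def_of_pos hR, ← Real.exp_add]
    ring_nf
  simp only [hexp]
  refine Real.tendsto_exp_atTop.comp
    (tendsto_natCast_atTop_atTop.atTop_mul_atTop₀ (tendsto_atTop_add_const_right _ _ ?_))
  exact (tendsto_atTop_add_const_right _ _ tendsto_natCast_atTop_atTop).atTop_mul_const ht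

theorem norm_iteratedDeriv_le_of_differentiableOn_ball {F : Type*} [NormedAddCommGroup F]
    [NormedSpace ℂ F] [CompleteSpace F] {f : ℂ → F} {c : ℂ} {r R C : ℝ}
    (hf : DifferentiableOn ℂ f (ball c r)) (hC : ∀ z ∈ ball c r, ‖f z‖ ≤ C)
    (hR : 0 < R) (hRr : R < r) (n : ℕ) :
    ‖iteratedDeriv n f c‖ ≤ n.factorial * C / R ^ n :=
  Complex.norm_iteratedDeriv_le_of_forall_mem_sphere_norm_le n hR
    (hf.diffContOnCl_ball (closedBall_subset_ball hRr))
    fun z hz => hC z (sphere_subset_closedBall.trans (closedBall_subset_ball hRr) hz)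

/-- There is no function `u(t,z)`, bounded and holomorphic in `z` for `t` in a sector of
opening `> π` (of any radius `T > 0`, in any direction `θ`) and `|z| < r`, whose `z`-Taylor
coefficients at `0` are `e^{n(n-1)t}` (i.e. `∂_z^n u(t,0) = n! e^{n(n-1)t}`) for `n ≥ 2`:
the Cauchy estimates `|n! e^{n(n-1)t}| ≤ C n!/Rⁿ` fail since `e^{n(n-1)t}` is unbounded
in `n` at points `t` of the sector with `Re t > 0`. -/
theorem heat_counterexample_not_summable (θ α r T C : ℝ)
    (hα : Real.pi / 2 < α) (hr : 0 < r) (hT : 0 < T) :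
    ¬ ∃ u : ℂ → ℂ → ℂ,
      (∀ t ∈ Sector θ α ∩ Metric.ball (0 : ℂ) T,
        DifferentiableOn ℂ (u t) (Metric.ball (0 : ℂ) r)) ∧
      (∀ t ∈ Sector θ α ∩ Metric.ball (0 : ℂ) T, ∀ z ∈ Metric.ball (0 : ℂ) r,
        ‖u t z‖ ≤ C) ∧
      (∀ t ∈ Sector θ α ∩ Metric.ball (0 : ℂ) T, ∀ n : ℕ, 2 ≤ n →
        iteratedDeriv n (u t) 0 =
          (Nat.factorial n) * Complex.exp ((n : ℂ) * ((n : ℂ) - 1) * t)) := by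
  rintro ⟨u, hdiff, hbound, hcoef⟩
  obtain ⟨t, hsector, hnorm, hre⟩ := exists_mem_sector_norm_eq_re_pos θ hα (half_pos hT)
  have ht : t ∈ Sector θ α ∩ ball 0 T := ⟨hsector, by simp [hnorm, hT]⟩
  have hcauchy :
      ∀ n : ℕ, 2 ≤ n → ‖Complex.exp (n * (n - 1) * t)‖ * (r / 2) ^ n ≤ C := by
    intro n hn
    have hest := norm_iteratedDeriv_le_of_differentiableOn_ball (hdiff t ht) (hbound t ht)
      (half_pos hr) (half_lt_self hr) n
    rw [hcoef t ht n hn, norm_mul, Complex.norm_natCast, mul_div_assoc] at hest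
    rw [← le_div_iff₀ (by positivity)]
    exact le_of_mul_le_mul_left hest (by positivity)
  have hgrowth := tendsto_norm_exp_mul_mul_pow_atTop hre (half_pos hr)
  obtain ⟨n, hgt, hn⟩ := ((hgrowth.eventually_gt_atTop C).and (eventually_ge_atTop 2)).exists
  exact (hcauchy n hn).not_gt hgt
end

section
/- Suppose a(z) = bz with b ≠ 0 and f(t,z) = Σ_{j,n} f_{j,n} t^j/j! · z^n/n!. Then the unique formal solution u of (1 − bz∂_t^{−1}∂_z²)u = f satisfies u_{*,0}(t) = f_{*,0}(t) = Σ_j f_{j,0} t^j/j!, and u_{*,1}(t) = Σ_{j,k≥0} f_{j,k+1} b^k k! · t^{j+k}/(j+k)!. -/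
/-!
Unfolding the coefficient recursion `u_{j,n} = f_{j,n} + b n u_{j-1,n+1}` down to `j = 0` gives
`u_{m,n} = Σ_{k ≤ m} b^k n(n+1)⋯(n+k-1) f_{m-k,n+k}`, the coefficient form of
`u = Σ_k (b z ∂_t⁻¹ ∂_z²)^k f`. At `n = 0` the correction term carries the factor `n = 0`, and at
`n = 1` the rising factorial is `k!`.
-/

theorem Nat.ascFactorial_succ_eq_mul_succ_ascFactorial (n k : ℕ) :
    n.ascFactorial (k + 1) = n * (n + 1).ascFactorial k := by
  rw [Nat.succ_ascFactorial, Nat.ascFactorial_succ]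

theorem coeff_eq_sum_ascFactorial {R : Type*} [CommSemiring R] (b : R) (f u : ℕ → ℕ → R)
    (hrec : ∀ j n : ℕ, u j n = f j n + (if j = 0 then 0 else b * n * u (j - 1) (n + 1))) :
    ∀ m n : ℕ, u m n =
      ∑ k ∈ Finset.range (m + 1), b ^ k * (n.ascFactorial k) * f (m - k) (n + k) := by
  intro m
  induction m with
  | zero => intro n; simp [hrec 0 n]
  | succ m ih =>
    intro n
    rw [hrec, if_neg m.succ_ne_zero, Nat.add_sub_cancel, ih, Finset.sum_range_succ' _ (m + 1),
      Finset.mul_sum]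
    simp only [pow_zero, Nat.ascFactorial_zero, Nat.cast_one, one_mul, Nat.sub_zero, add_zero,
      add_comm (f (m + 1) n)]
    congr 1
    refine Finset.sum_congr rfl fun k _ => ?_
    rw [Nat.ascFactorial_succ_eq_mul_succ_ascFactorial, Nat.add_sub_add_right,
      add_right_comm n 1 k, add_assoc n k 1]
    push_cast
    ring

theorem linear_a_initial_coeffs_general (b : ℂ) (f u : ℕ → ℕ → ℂ)
    (hrec : ∀ j n : ℕ,
      u j n = f j n + (if j = 0 then 0 else b * n * u (j - 1) (n + 1))) :
    (∀ j : ℕ, u j 0 = f j 0) ∧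
    (∀ m : ℕ, u m 1 =
      ∑ k ∈ Finset.range (m + 1), b ^ k * (Nat.factorial k) * f (m - k) (k + 1)) := by
  refine ⟨fun j => by simp [hrec j 0], fun m => ?_⟩
  rw [coeff_eq_sum_ascFactorial b f u hrec m 1]
  refine Finset.sum_congr rfl fun k _ => ?_
  rw [Nat.one_ascFactorial, add_comm 1 k]

/-- Case `a(z) = bz`, `b ≠ 0`, with general `f = Σ_{j,n} f_{j,n} t^j/j! zⁿ/n!`.
Writing `u = Σ_{j,n} u_{j,n} t^j/j! zⁿ/n!`, the equation `(1 - bz ∂_t^{-1} ∂_z²) u = f`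
reads `u_{j,n} = f_{j,n} + b n u_{j-1,n+1}` (with `u_{-1,·} = 0`). Then
`u_{*,0} = f_{*,0}` (i.e. `u_{j,0} = f_{j,0}` for all `j`) and
`u_{*,1}(t) = Σ_{j,k} f_{j,k+1} b^k k! t^{j+k}/(j+k)!`, i.e.
`u_{m,1} = Σ_{k=0}^m b^k k! f_{m-k,k+1}`. -/
theorem linear_a_initial_coeffs (b : ℂ) (hb : b ≠ 0) (f u : ℕ → ℕ → ℂ)
    (hrec : ∀ j n : ℕ,
      u j n = f j n + (if j = 0 then 0 else b * n * u (j - 1) (n + 1))) :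
    (∀ j : ℕ, u j 0 = f j 0) ∧
    (∀ m : ℕ, u m 1 =
      ∑ k ∈ Finset.range (m + 1), b ^ k * (Nat.factorial k) * f (m - k) (k + 1)) :=
  linear_a_initial_coeffs_general b f u hrec
end
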